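/- Let n ≥ 2 be an integer and α > −1 a real number. Define u ∈ ℂⁿ by u_0 := sqrt((α+3)/(2(α+2))), u_1 := sqrt((α+1)/(2(α+2))), and u_j := 0 for 2 ≤ j ≤ n−1, and let v := e_0 = (1,0,…,0) ∈ ℂⁿ. Then ‖u‖ = ‖v‖ = 1 and, for every a ∈ L∞_lim([0,1)), ⟨γ(a)_0 u, u⟩ = ⟨γ(a)_2 v, v⟩; that is, Σ_{j,k=0}^{n−1} conj(u_j)·γ(a)_{0,j,k}·u_k = γ(a)_{2,0,0}. -/

import Mathlib

open MeasureTheory Filter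
open scoped ENNReal

noncomputable section

/-- Generalized binomial coefficient `x(x-1)⋯(x-j+1)/j!`. -/
def gbinom (x : ℝ) (j : ℕ) : ℝ :=
  (∏ i ∈ Finset.range j, (x - i)) / (Nat.factorial j)

/-- Shifted Jacobi polynomial `Q_m^{(α,β)}` on `[0,1]`:
`Q_m^{(α,β)}(t) = Σ_{k=0}^m binom(α+β+m+k,k)·binom(β+m,m-k)·(-1)^{m-k}·t^k`. -/
def jacQ (α β : ℝ) (m : ℕ) (t : ℝ) : ℝ :=
  ∑ k ∈ Finset.range (m + 1),
    gbinom (α + β + m + k) k * gbinom (β + m) (m - k) * (-1 : ℝ) ^ (m - k) * t ^ k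

/-- Normalizing coefficient
`κ(α,β,m) = sqrt((2m+α+β+1)·Γ(m+α+β+1)·m!/(Γ(m+α+1)·Γ(m+β+1)))`. -/
def jacCoef (α β : ℝ) (m : ℕ) : ℝ :=
  Real.sqrt ((2 * m + α + β + 1) * Real.Gamma (m + α + β + 1) * (Nat.factorial m) /
    (Real.Gamma (m + α + 1) * Real.Gamma (m + β + 1)))

/-- Jacobi function `J_m^{(α,β)}(t) = κ(α,β,m)·(1-t)^{α/2}·t^{β/2}·Q_m^{(α,β)}(t)`. -/
def jacJ (α β : ℝ) (m : ℕ) (t : ℝ) : ℝ :=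
  jacCoef α β m * (1 - t) ^ (α / 2) * t ^ (β / 2) * jacQ α β m t

/-- `dd n ξ = min(n+ξ, n)` (for `ξ ≥ 1-n`), written as a total function into `ℕ`. -/
def dd (n : ℕ) (ξ : ℤ) : ℕ := n - (-ξ).toNat

lemma dd_le (n : ℕ) (ξ : ℤ) : dd n ξ ≤ n := Nat.sub_le _ _

/-- The set `Ω_n = {ξ ∈ ℤ : ξ ≥ -n+1}` as a subtype. -/
abbrev Om (n : ℕ) : Type := {ξ : ℤ // 1 - (n : ℤ) ≤ ξ}

/-- The entry `γ(a)_{ξ,j,k} = κ(α,|ξ|,j)·κ(α,|ξ|,k)·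
∫₀¹ a(√t)·Q_j^{(α,|ξ|)}(t)·Q_k^{(α,|ξ|)}(t)·(1-t)^α·t^{|ξ|} dt`. -/
def gammaEnt (α : ℝ) (a : ℝ → ℂ) (ξ : ℤ) (j k : ℕ) : ℂ :=
  ((jacCoef α ξ.natAbs j * jacCoef α ξ.natAbs k : ℝ) : ℂ) *
    ∫ t in (0:ℝ)..1, a (Real.sqrt t) *
      ((jacQ α ξ.natAbs j t * jacQ α ξ.natAbs k t * (1 - t) ^ α * t ^ (ξ.natAbs) : ℝ) : ℂ)

/-- The matrix `γ(a)_ξ ∈ M_{d_ξ}(ℂ)`. -/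
def gammaMat (n : ℕ) (α : ℝ) (a : ℝ → ℂ) (ξ : ℤ) :
    Matrix (Fin (dd n ξ)) (Fin (dd n ξ)) ℂ :=
  Matrix.of fun j k => gammaEnt α a ξ (j : ℕ) (k : ℕ)

/-- Bounded measurable functions on `[0,1)` having a finite limit at `1⁻`. -/
def LinfLim (a : ℝ → ℂ) : Prop :=
  Measurable a ∧ (∃ C : ℝ, ∀ r ∈ Set.Ico (0:ℝ) 1, ‖a r‖ ≤ C) ∧
    ∃ ω : ℂ, Tendsto a (nhdsWithin 1 (Set.Ico (0:ℝ) 1)) (nhds ω)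

/-- The generating symbol `g_p(t) = Q_p^{(α,0)}(t²)`, as a complex-valued function. -/
def gSym (α : ℝ) (p : ℕ) (t : ℝ) : ℂ := ((jacQ α 0 p (t ^ 2) : ℝ) : ℂ)

/-- `⟨A w, w⟩ = Σ_{j,k} conj(w_j)·A_{j,k}·w_k`. -/
def innerForm {d : ℕ} (A : Matrix (Fin d) (Fin d) ℂ) (w : Fin d → ℂ) : ℂ :=
  ∑ j : Fin d, ∑ k : Fin d, (starRingEnd ℂ) (w j) * A j k * w k

/-!
With `c := √((α+1)(α+3)/(2(α+2)))` one has `κ(α,0,0)·u₀ = κ(α,0,1)·u₁ = c`, so the quadratic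
form `⟨γ(a)₀ u, u⟩` is the integral of `a(√t)·(c·Q₀ + c·Q₁)²·(1-t)^α`, where `Qⱼ = Qⱼ^{(α,0)}`
and `Q₀ + Q₁ = 1 + ((α+2)t - 1) = (α+2)t`. Since `c²(α+2)² = (α+1)(α+2)(α+3)/2 = κ(α,2,0)²`,
this is exactly the integral defining `γ(a)_{2,0,0}`.
-/

lemma jacQ_zero (α β t : ℝ) : jacQ α β 0 t = 1 := by
  simp [jacQ, gbinom]

lemma jacQ_one (α β t : ℝ) : jacQ α β 1 t = (α + β + 2) * t - (β + 1) := by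
  rw [jacQ, Finset.sum_range_succ, Finset.sum_range_one]
  norm_num [gbinom]
  ring

@[fun_prop]
lemma continuous_jacQ (α β : ℝ) (m : ℕ) : Continuous (jacQ α β m) := by
  unfold jacQ
  fun_prop

lemma jacCoef_zero_right {α : ℝ} (hα : -1 < α) (m : ℕ) :
    jacCoef α 0 m = Real.sqrt (2 * m + α + 1) := by
  have hΓ : Real.Gamma (m + α + 1) ≠ 0 :=
    (Real.Gamma_pos_of_pos (by linarith [m.cast_nonneg (α := ℝ)])).ne'
  unfold jacCoef
  rw [add_zero, add_zero, add_zero, Real.Gamma_nat_eq_factorial]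
  field_simp

lemma jacCoef_two_zero {α : ℝ} (hα : -1 < α) :
    jacCoef α 2 0 = Real.sqrt ((α + 1) * (α + 2) * (α + 3) / 2) := by
  have hΓ : Real.Gamma (α + 1) ≠ 0 := (Real.Gamma_pos_of_pos (by linarith)).ne'
  rw [jacCoef]
  congr 1
  norm_num
  rw [Real.Gamma_add_one (by linarith), show α + 2 = α + 1 + 1 by ring,
    Real.Gamma_add_one (by linarith)]
  field_simp
  ring

lemma sqrt_mul_jacCoef_zero_zero {α : ℝ} (hα : -1 < α) :
    Real.sqrt ((α + 3) / (2 * (α + 2))) * jacCoef α 0 0 =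
      Real.sqrt ((α + 1) * (α + 3) / (2 * (α + 2))) := by
  have hα₂ : 0 < α + 2 := by linarith
  have hα₃ : 0 ≤ α + 3 := by linarith
  rw [jacCoef_zero_right hα, ← Real.sqrt_mul (by positivity)]
  congr 1
  push_cast
  ring

lemma sqrt_mul_jacCoef_zero_one {α : ℝ} (hα : -1 < α) :
    Real.sqrt ((α + 1) / (2 * (α + 2))) * jacCoef α 0 1 =
      Real.sqrt ((α + 1) * (α + 3) / (2 * (α + 2))) := by
  have hα₁ : 0 ≤ α + 1 := by linarith
  have hα₂ : 0 < α + 2 := by linarith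
  rw [jacCoef_zero_right hα, ← Real.sqrt_mul (by positivity)]
  congr 1
  push_cast
  ring

lemma sqrt_sq_mul_sq_eq_jacCoef_two_zero_sq {α : ℝ} (hα : -1 < α) :
    Real.sqrt ((α + 1) * (α + 3) / (2 * (α + 2))) ^ 2 * (α + 2) ^ 2 = jacCoef α 2 0 ^ 2 := by
  have hα₁ : 0 ≤ α + 1 := by linarith
  have hα₂ : 0 < α + 2 := by linarith
  have hα₃ : 0 ≤ α + 3 := by linarith
  rw [jacCoef_two_zero hα, Real.sq_sqrt (by positivity), Real.sq_sqrt (by positivity)]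
  field_simp

lemma intervalIntegrable_comp_sqrt_mul {a : ℝ → ℂ} (ha : Measurable a) {C : ℝ}
    (hC : ∀ r ∈ Set.Ico (0 : ℝ) 1, ‖a r‖ ≤ C) {g : ℝ → ℂ}
    (hg : IntervalIntegrable g volume 0 1) :
    IntervalIntegrable (fun t => a (Real.sqrt t) * g t) volume 0 1 := by
  rw [intervalIntegrable_iff_integrableOn_Ioo_of_le zero_le_one] at hg ⊢
  refine hg.bdd_mul (c := C) (ha.comp Real.continuous_sqrt.measurable).aestronglyMeasurable ?_
  filter_upwards [ae_restrict_mem measurableSet_Ioo] with t ht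
  exact hC _ ⟨Real.sqrt_nonneg t, (Real.sqrt_lt' one_pos).2 (by simpa using ht.2)⟩

lemma intervalIntegrable_mul_one_sub_rpow {α : ℝ} (hα : -1 < α) {P : ℝ → ℝ}
    (hP : Continuous P) :
    IntervalIntegrable (fun t => ((P t * (1 - t) ^ α : ℝ) : ℂ)) volume 0 1 := by
  have h := (intervalIntegral.intervalIntegrable_rpow' hα (a := 0) (b := 1)).comp_sub_left 1
  simp only [sub_zero, sub_self] at h
  have h' := h.symm.continuousOn_mul hP.continuousOn
  exact ⟨h'.1.ofReal, h'.2.ofReal⟩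

theorem sum_conj_mul_gammaEnt_mul_eq_integral {α : ℝ} (hα : -1 < α) {a : ℝ → ℂ}
    (ha : Measurable a) {C : ℝ} (hC : ∀ r ∈ Set.Ico (0 : ℝ) 1, ‖a r‖ ≤ C) (ξ : ℤ) {d : ℕ}
    (w : Fin d → ℝ) :
    ∑ j : Fin d, ∑ k : Fin d, (starRingEnd ℂ) (w j) * gammaEnt α a ξ j k * w k =
      ∫ t in (0 : ℝ)..1, a (Real.sqrt t) *
        (((∑ j : Fin d, w j * jacCoef α ξ.natAbs j * jacQ α ξ.natAbs j t) ^ 2 *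
          t ^ ξ.natAbs * (1 - t) ^ α : ℝ) : ℂ) := by
  set m := ξ.natAbs
  set f : Fin d → ℝ → ℝ := fun j t => w j * jacCoef α m j * jacQ α m j t
  have hint : ∀ j k, IntervalIntegrable
      (fun t => a (Real.sqrt t) * ((f j t * f k t * t ^ m * (1 - t) ^ α : ℝ) : ℂ)) volume 0 1 :=
    fun j k => intervalIntegrable_comp_sqrt_mul ha hC
      (intervalIntegrable_mul_one_sub_rpow hα (P := fun t => f j t * f k t * t ^ m)
        (by simp only [f]; fun_prop))
  calc ∑ j : Fin d, ∑ k : Fin d, (starRingEnd ℂ) (w j) * gammaEnt α a ξ j k * w k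
      = ∑ j : Fin d, ∑ k : Fin d, ∫ t in (0 : ℝ)..1,
          a (Real.sqrt t) * ((f j t * f k t * t ^ m * (1 - t) ^ α : ℝ) : ℂ) := by
        refine Finset.sum_congr rfl fun j _ => Finset.sum_congr rfl fun k _ => ?_
        rw [gammaEnt, Complex.conj_ofReal, ← intervalIntegral.integral_const_mul,
          ← intervalIntegral.integral_const_mul, ← intervalIntegral.integral_mul_const]
        refine intervalIntegral.integral_congr fun t _ => ?_
        simp only [f]
        push_cast
        ring
    _ = ∫ t in (0 : ℝ)..1, ∑ j : Fin d, ∑ k : Fin d,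
          a (Real.sqrt t) * ((f j t * f k t * t ^ m * (1 - t) ^ α : ℝ) : ℂ) := by
        rw [intervalIntegral.integral_finsetSum fun j _ => ?_]
        · exact Finset.sum_congr rfl fun j _ =>
            (intervalIntegral.integral_finsetSum fun k _ => hint j k).symm
        · simpa only [Finset.sum_fn] using IntervalIntegrable.sum _ fun k _ => hint j k
    _ = _ := by
        refine intervalIntegral.integral_congr fun t _ => ?_
        simp only [sq, Finset.sum_mul, Complex.ofReal_sum, Finset.mul_sum]
        exact Finset.sum_comm

/-- the pure states associated to `(ξ,u)=(0,u)` and `(η,v)=(2,e₀)` coincide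
on all matrix sequences `γ(a)`, `a ∈ L∞_lim([0,1))`. -/
theorem statement2 (n : ℕ) (hn : 2 ≤ n) (α : ℝ) (hα : -1 < α) :
    let u : Fin n → ℂ := fun j =>
      if (j : ℕ) = 0 then ((Real.sqrt ((α + 3) / (2 * (α + 2))) : ℝ) : ℂ)
      else if (j : ℕ) = 1 then ((Real.sqrt ((α + 1) / (2 * (α + 2))) : ℝ) : ℂ) else 0
    let v : Fin n → ℂ := fun j => if (j : ℕ) = 0 then 1 else 0
    (∑ j : Fin n, ‖u j‖ ^ 2 = 1) ∧
    (∑ j : Fin n, ‖v j‖ ^ 2 = 1) ∧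
    ∀ a : ℝ → ℂ, LinfLim a →
      (∑ j : Fin n, ∑ k : Fin n, (starRingEnd ℂ) (u j) * gammaEnt α a 0 (j : ℕ) (k : ℕ) * u k)
        = (∑ j : Fin n, ∑ k : Fin n,
            (starRingEnd ℂ) (v j) * gammaEnt α a 2 (j : ℕ) (k : ℕ) * v k) := by
  intro u v
  obtain ⟨m, rfl⟩ : ∃ m, n = m + 2 := ⟨n - 2, by omega⟩
  have hu : u = fun j : Fin (m + 2) =>
      ((if (j : ℕ) = 0 then Real.sqrt ((α + 3) / (2 * (α + 2)))
        else if (j : ℕ) = 1 then Real.sqrt ((α + 1) / (2 * (α + 2))) else 0 : ℝ) : ℂ) := by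
    funext j; simp only [u]; split_ifs <;> simp
  have hv : v = fun j : Fin (m + 2) => ((if (j : ℕ) = 0 then 1 else 0 : ℝ) : ℂ) := by
    funext j; simp only [v]; split_ifs <;> simp
  refine ⟨?_, ?_, ?_⟩
  · have hα₁ : 0 ≤ α + 1 := by linarith
    have hα₂ : 0 < α + 2 := by linarith
    have hα₃ : 0 ≤ α + 3 := by linarith
    simp only [hu, Fin.val_eq_zero_iff, Complex.norm_real, Real.norm_eq_abs, sq_abs, ite_pow, ne_eq,
      OfNat.ofNat_ne_zero, not_false_eq_true, zero_pow, Fin.sum_univ_succ, ↓reduceIte,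
      Fin.succ_ne_zero, Fin.val_succ, Nat.add_eq_right, Finset.sum_ite_eq', Finset.mem_univ]
    rw [Real.sq_sqrt (by positivity), Real.sq_sqrt (by positivity)]
    field_simp
    ring
  · simp [hv]
  · rintro a ⟨ha, ⟨C, hC⟩, -⟩
    rw [hu, hv, sum_conj_mul_gammaEnt_mul_eq_integral hα ha hC,
      sum_conj_mul_gammaEnt_mul_eq_integral hα ha hC]
    refine intervalIntegral.integral_congr fun t _ => ?_
    congr 3
    simp only [Fin.val_eq_zero_iff, Int.natAbs_zero, CharP.cast_eq_zero, ite_mul, zero_mul,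
      Fin.sum_univ_succ, ↓reduceIte, Fin.coe_ofNat_eq_mod, Nat.zero_mod, jacQ_zero, jacQ_one,
      sqrt_mul_jacCoef_zero_zero hα, sqrt_mul_jacCoef_zero_one hα, Fin.succ_ne_zero, Fin.val_succ,
      Nat.add_eq_right, Finset.sum_ite_eq', Finset.mem_univ, Int.reduceAbs, Nat.cast_ofNat,
      mul_one, one_mul, zero_add, add_zero, pow_zero]
    linear_combination t ^ 2 * sqrt_sq_mul_sq_eq_jacCoef_two_zero_sq hα
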